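/- arXiv:2505.02044 — 6 statements merged into one kernel-verified Lean document; each statement's English description precedes it below -/
import Mathlib

section
/- For any elements f ∈ P_m, g ∈ P_n, h ∈ P_k of a nonsymmetric operad P, the contraction operator ι_g f := Σ_{i=1}^m (-1)^{(i-1)(n-1)} f ∘_i g satisfies the graded pre-Lie identity: ι_h ι_g f − ι_{ι_h g} f = (-1)^{(n-1)(k-1)} (ι_g ι_h f − ι_{ι_g h} f). -/
/-- A nonsymmetric operad (in "arity minus one" indexing: `Q n` is the space of
operations of arity `n + 1`, i.e. the space `P_{n+1}` of the paper), given by a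
collection of `k`-modules with partial compositions
`∘ᵢ : P_{m+1} × P_{n+1} → P_{m+n+1}` (here `i : Fin (m+1)` is the 0-based
position), satisfying the sequential and parallel associativity axioms and
unit axioms.  The target degree is a free variable `p` constrained by
`m + n = p`, which avoids dependent-type casts in the axioms. -/
structure NSOperad (k : Type*) [Field k] (Q : ℕ → Type*)
    [∀ n, AddCommGroup (Q n)] [∀ n, Module k (Q n)] where
  comp : ∀ {m n p : ℕ}, m + n = p → Q m → Fin (m + 1) → Q n → Q p
  comp_add_left : ∀ {m n p : ℕ} (h : m + n = p) (f f' : Q m) (i : Fin (m + 1)) (g : Q n),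
    comp h (f + f') i g = comp h f i g + comp h f' i g
  comp_add_right : ∀ {m n p : ℕ} (h : m + n = p) (f : Q m) (i : Fin (m + 1)) (g g' : Q n),
    comp h f i (g + g') = comp h f i g + comp h f i g'
  comp_smul_left : ∀ {m n p : ℕ} (h : m + n = p) (a : k) (f : Q m) (i : Fin (m + 1)) (g : Q n),
    comp h (a • f) i g = a • comp h f i g
  comp_smul_right : ∀ {m n p : ℕ} (h : m + n = p) (a : k) (f : Q m) (i : Fin (m + 1)) (g : Q n),
    comp h f i (a • g) = a • comp h f i g
  one : Q 0
  comp_one : ∀ {m : ℕ} (f : Q m) (i : Fin (m + 1)), comp (Nat.add_zero m) f i one = f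
  one_comp : ∀ {m : ℕ} (f : Q m), comp (Nat.zero_add m) one 0 f = f
  assoc_seq : ∀ {m n l q r p : ℕ} (h0 : n + l = q) (h1 : m + q = p) (h2 : m + n = r)
    (h3 : r + l = p) (f : Q m) (g : Q n) (hh : Q l) (i : Fin (m + 1)) (j : Fin (n + 1)),
    comp h1 f i (comp h0 g j hh) =
      comp h3 (comp h2 f i g) ⟨(i : ℕ) + (j : ℕ), by have := i.isLt; have := j.isLt; omega⟩ hh
  assoc_par : ∀ {m n l r s p : ℕ} (h2 : m + n = r) (h3 : r + l = p) (h4 : m + l = s)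
    (h5 : s + n = p) (f : Q m) (g : Q n) (hh : Q l) (i j : Fin (m + 1)), (i : ℕ) < (j : ℕ) →
    comp h3 (comp h2 f i g) ⟨(j : ℕ) + n, by have := j.isLt; omega⟩ hh =
      comp h5 (comp h4 f j hh) ⟨(i : ℕ), by have := i.isLt; omega⟩ g

namespace NSOperad

variable {k : Type*} [Field k] {Q : ℕ → Type*}
  [∀ n, AddCommGroup (Q n)] [∀ n, Module k (Q n)]

/-- Transport along an equality of degrees. -/
def tr {i j : ℕ} (h : i = j) (x : Q i) : Q j := h ▸ x

variable (O : NSOperad k Q)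

/-- The contraction operator `ι_g f := Σᵢ (-1)^{(i-1)(n-1)} f ∘ᵢ g`
(for `f ∈ P_{m+1}`, `g ∈ P_{n+1}` in paper degrees). -/
def iota {m n : ℕ} (g : Q n) (f : Q m) : Q (m + n) :=
  ∑ i : Fin (m + 1), ((-1 : k) ^ ((i : ℕ) * n)) • O.comp rfl f i g

/-- `π ∈ P_2` is a multiplication if `π ∘₁ π = π ∘₂ π`. -/
def IsMult (π : Q 1) : Prop := O.comp rfl π 0 π = O.comp rfl π 1 π

/-- The Gerstenhaber–Voronov bracket `[f,g]_GV = ι_f g − (-1)^{mn} ι_g f`. -/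
def gv {m n : ℕ} (f : Q m) (g : Q n) : Q (m + n) :=
  tr (by omega : n + m = m + n) (O.iota f g) - ((-1 : k) ^ (m * n)) • O.iota g f

/-- The differential `δ_π f := −[π, f]_GV`. -/
def delta (π : Q 1) {n : ℕ} (f : Q n) : Q (n + 1) :=
  - tr (by omega : 1 + n = n + 1) (O.gv π f)

/-- The map `θ f := −ι_f π`. -/
def theta (π : Q 1) {n : ℕ} (f : Q n) : Q (n + 1) :=
  - tr (by omega : 1 + n = n + 1) (O.iota f π)

/-- The map `D f := −ι_π f`. -/
def Dop (π : Q 1) {n : ℕ} (f : Q n) : Q (n + 1) := - O.iota π f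

/-- The cup product `f ∪_π g := (π ∘₂ g) ∘₁ f`. -/
def cup (π : Q 1) {m n : ℕ} (f : Q m) (g : Q n) : Q (m + n + 1) :=
  O.comp (by omega : (1 + n) + m = m + n + 1) (O.comp rfl π 1 g) 0 f

/-- The cup bracket `[f,g]_π := f ∪_π g − (-1)^{(m+1)(n+1)} g ∪_π f`
(paper degrees `m+1`, `n+1`). -/
def cupBracket (π : Q 1) {m n : ℕ} (f : Q m) (g : Q n) : Q (m + n + 1) :=
  O.cup π f g - ((-1 : k) ^ ((m + 1) * (n + 1))) •
    tr (by omega : n + m + 1 = m + n + 1) (O.cup π g f)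

/-- The Frölicher–Nijenhuis bracket
`[f,g]_FN := [f,g]_π + (-1)^{m+1} ι_{δ_π f} g − (-1)^{(m+2)(n+1)} ι_{δ_π g} f`
(paper degrees `m+1`, `n+1`). -/
def fn (π : Q 1) {m n : ℕ} (f : Q m) (g : Q n) : Q (m + n + 1) :=
  O.cupBracket π f g
    + ((-1 : k) ^ (m + 1)) •
        tr (by omega : n + (m + 1) = m + n + 1) (O.iota (O.delta π f) g)
    - ((-1 : k) ^ ((m + 2) * (n + 1))) •
        tr (by omega : m + (n + 1) = m + n + 1) (O.iota (O.delta π g) f)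

/-- The derived bracket
`[f,g]_D := [f,g]_π + ι_{θ f} g − (-1)^{(m+1)(n+1)} ι_{θ g} f`. -/
def derived (π : Q 1) {m n : ℕ} (f : Q m) (g : Q n) : Q (m + n + 1) :=
  O.cupBracket π f g
    + tr (by omega : n + (m + 1) = m + n + 1) (O.iota (O.theta π f) g)
    - ((-1 : k) ^ ((m + 1) * (n + 1))) •
        tr (by omega : m + (n + 1) = m + n + 1) (O.iota (O.theta π g) f)

/-- The deformed element `π_S := π ∘₁ S + π ∘₂ S − S ∘₁ π` for `S ∈ P_1`. -/
def piDef (π : Q 1) (S : Q 0) : Q 1 :=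
  O.comp rfl π 0 S + O.comp rfl π 1 S - O.comp rfl S 0 π

/-- `S ∈ P_1` is a Nijenhuis element for the multiplication `π`:
`(π ∘₂ S) ∘₁ S = S ∘₁ (π ∘₁ S + π ∘₂ S − S ∘₁ π)`. -/
def IsNijenhuisFor (π : Q 1) (S : Q 0) : Prop :=
  O.comp rfl (O.comp rfl π 1 S) 0 S = O.comp rfl S 0 (O.piDef π S)

/-- Powers `N^j := N ∘₁ N^{j-1}`, `N^0 = 𝟙`. -/
def Npow (N : Q 0) : ℕ → Q 0
  | 0 => O.one
  | (j + 1) => O.comp (rfl : (0 : ℕ) + 0 = 0) N 0 (Npow N j)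

/-- `R ∈ P_1` is a Rota–Baxter element of weight `lam`:
`(π ∘₂ R) ∘₁ R = R ∘₁ (π ∘₁ R + π ∘₂ R + lam π)`. -/
def IsRB (π : Q 1) (lam : k) (R : Q 0) : Prop :=
  O.comp rfl (O.comp rfl π 1 R) 0 R =
    O.comp rfl R 0 (O.comp rfl π 0 R + O.comp rfl π 1 R + lam • π)

/-- `r ∈ P_1` is an averaging element:
`(π ∘₂ r) ∘₁ r = r ∘₁ (π ∘₁ r) = r ∘₁ (π ∘₂ r)`. -/
def IsAvg (π : Q 1) (r : Q 0) : Prop :=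
  O.comp rfl (O.comp rfl π 1 r) 0 r = O.comp rfl r 0 (O.comp rfl π 0 r) ∧
  O.comp rfl (O.comp rfl π 1 r) 0 r = O.comp rfl r 0 (O.comp rfl π 1 r)

end NSOperad

open NSOperad

namespace PreLieAux

open Finset NSOperad

variable {k : Type*} [Field k] {Q : ℕ → Type*}
  [∀ n, AddCommGroup (Q n)] [∀ n, Module k (Q n)]

theorem tr_smul {i j : ℕ} (e : i = j) (a : k) (x : Q i) :
    tr e (a • x) = a • (tr e x : Q j) := by subst e; rfl

theorem tr_sum {α : Type*} (s : Finset α) {i j : ℕ} (e : i = j) (F : α → Q i) :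
    tr e (∑ a ∈ s, F a) = ∑ a ∈ s, (tr e (F a) : Q j) := by subst e; rfl

variable (O : NSOperad k Q)

theorem tr_comp {m n p p' : ℕ} (hp : m + n = p) (e : p = p') (f : Q m) (i : Fin (m + 1))
    (g : Q n) : tr e (O.comp hp f i g) = O.comp (hp.trans e) f i g := by subst e; rfl

theorem iota_def {m n : ℕ} (g : Q n) (f : Q m) :
    O.iota g f = ∑ i : Fin (m + 1), ((-1 : k) ^ ((i : ℕ) * n)) • O.comp rfl f i g := rfl

theorem comp_zero_left {m n p : ℕ} (hp : m + n = p) (i : Fin (m + 1)) (g : Q n) :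
    O.comp hp (0 : Q m) i g = 0 := by
  have h2 := O.comp_smul_left hp (0 : k) 0 i g
  simpa using h2

theorem comp_zero_right {m n p : ℕ} (hp : m + n = p) (f : Q m) (i : Fin (m + 1)) :
    O.comp hp f i (0 : Q n) = 0 := by
  have h2 := O.comp_smul_right hp (0 : k) f i 0
  simpa using h2

theorem comp_sum_left {α : Type*} (s : Finset α) {m n p : ℕ} (hp : m + n = p)
    (F : α → Q m) (i : Fin (m + 1)) (g : Q n) :
    O.comp hp (∑ a ∈ s, F a) i g = ∑ a ∈ s, O.comp hp (F a) i g := by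
  classical
  induction s using Finset.induction_on with
  | empty => simpa using comp_zero_left O hp i g
  | @insert a s ha ih =>
      rw [Finset.sum_insert ha, Finset.sum_insert ha, O.comp_add_left, ih]

theorem comp_sum_right {α : Type*} (s : Finset α) {m n p : ℕ} (hp : m + n = p)
    (f : Q m) (i : Fin (m + 1)) (F : α → Q n) :
    O.comp hp f i (∑ a ∈ s, F a) = ∑ a ∈ s, O.comp hp f i (F a) := by
  classical
  induction s using Finset.induction_on with
  | empty => simpa using comp_zero_right O hp f i
  | @insert a s ha ih =>
      rw [Finset.sum_insert ha, Finset.sum_insert ha, O.comp_add_right, ih]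

/-- `(f ∘ᵢ g) ∘ⱼ h`, extended by zero outside the valid index range. -/
def Tn {m n p : ℕ} (f : Q m) (g : Q n) (h : Q p) (i j : ℕ) : Q (m + (n + p)) :=
  if hi : i < m + 1 then
    if hj : j < m + n + 1 then
      O.comp (by omega) (O.comp rfl f ⟨i, hi⟩ g) ⟨j, hj⟩ h
    else 0
  else 0

/-- `(f ∘ᵢ h) ∘ⱼ g`, extended by zero outside the valid index range. -/
def Un {m n p : ℕ} (f : Q m) (g : Q n) (h : Q p) (i j : ℕ) : Q (m + (n + p)) :=
  if hi : i < m + 1 then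
    if hj : j < m + p + 1 then
      O.comp (by omega) (O.comp rfl f ⟨i, hi⟩ h) ⟨j, hj⟩ g
    else 0
  else 0

theorem Tn_eq {m n p : ℕ} (f : Q m) (g : Q n) (h : Q p) {i j : ℕ}
    (hi : i < m + 1) (hj : j < m + n + 1) (e : m + n + p = m + (n + p)) :
    Tn O f g h i j = O.comp e (O.comp rfl f ⟨i, hi⟩ g) ⟨j, hj⟩ h := by
  unfold Tn
  rw [dif_pos hi, dif_pos hj]

theorem Un_eq {m n p : ℕ} (f : Q m) (g : Q n) (h : Q p) {i j : ℕ}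
    (hi : i < m + 1) (hj : j < m + p + 1) (e : m + p + n = m + (n + p)) :
    Un O f g h i j = O.comp e (O.comp rfl f ⟨i, hi⟩ h) ⟨j, hj⟩ g := by
  unfold Un
  rw [dif_pos hi, dif_pos hj]

theorem comp_eq_Tn {m n p : ℕ} (f : Q m) (g : Q n) (h : Q p) (i : Fin (m + 1))
    (j : Fin (m + n + 1)) {e : m + n + p = m + (n + p)} :
    O.comp e (O.comp rfl f i g) j h = Tn O f g h (i : ℕ) (j : ℕ) := by
  rw [Tn_eq O f g h i.isLt j.isLt e]

theorem comp_eq_Un {m n p : ℕ} (f : Q m) (g : Q n) (h : Q p) (i : Fin (m + 1))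
    (j : Fin (m + p + 1)) {e : m + p + n = m + (n + p)} :
    O.comp e (O.comp rfl f i h) j g = Un O f g h (i : ℕ) (j : ℕ) := by
  rw [Un_eq O f g h i.isLt j.isLt e]

theorem seqT {m n p : ℕ} (f : Q m) (g : Q n) (h : Q p) (i : Fin (m + 1)) (j : Fin (n + 1)) :
    O.comp rfl f i (O.comp rfl g j h) = Tn O f g h (i : ℕ) ((i : ℕ) + (j : ℕ)) := by
  rw [Tn_eq O f g h i.isLt (show (i : ℕ) + (j : ℕ) < m + n + 1 by omega) (by omega)]
  exact O.assoc_seq rfl rfl rfl (by omega) f g h i j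

theorem seqU {m n p : ℕ} (f : Q m) (g : Q n) (h : Q p) (e : m + (p + n) = m + (n + p))
    (i : Fin (m + 1)) (j : Fin (p + 1)) :
    O.comp e f i (O.comp rfl h j g) = Un O f g h (i : ℕ) ((i : ℕ) + (j : ℕ)) := by
  rw [Un_eq O f g h i.isLt (show (i : ℕ) + (j : ℕ) < m + p + 1 by omega) (by omega)]
  exact O.assoc_seq rfl e rfl (by omega) f h g i j

theorem par1 {m n p : ℕ} (f : Q m) (g : Q n) (h : Q p) {i j : ℕ}
    (hi : i < m + 1) (hj : j < m + 1) (hij : i < j) :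
    Tn O f g h i (j + n) = Un O f g h j i := by
  rw [Tn_eq O f g h hi (by omega) (by omega), Un_eq O f g h hj (by omega) (by omega)]
  exact O.assoc_par rfl (by omega) rfl (by omega) f g h ⟨i, hi⟩ ⟨j, hj⟩ hij

theorem par2 {m n p : ℕ} (f : Q m) (g : Q n) (h : Q p) {i j : ℕ}
    (hi : i < m + 1) (hj : j < m + 1) (hij : i < j) :
    Un O f g h i (j + p) = Tn O f g h j i := by
  rw [Un_eq O f g h hi (by omega) (by omega), Tn_eq O f g h hj (by omega) (by omega)]
  exact O.assoc_par rfl (by omega) rfl (by omega) f h g ⟨i, hi⟩ ⟨j, hj⟩ hij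

theorem pow_neg_one_add_two_mul (a b : ℕ) : ((-1 : k) ^ (a + 2 * b)) = (-1 : k) ^ a := by
  rw [pow_add, pow_mul, neg_one_sq, one_pow, mul_one]

theorem expandA {m n p : ℕ} (f : Q m) (g : Q n) (h : Q p) (e : m + n + p = m + (n + p)) :
    tr e (O.iota h (O.iota g f)) =
      ∑ x ∈ range (m + 1) ×ˢ range (m + n + 1),
        ((-1 : k) ^ (x.1 * n + x.2 * p)) • Tn O f g h x.1 x.2 := by
  calc tr e (O.iota h (O.iota g f))
      = ∑ j : Fin (m + n + 1), ∑ i : Fin (m + 1),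
          ((-1 : k) ^ ((i : ℕ) * n + (j : ℕ) * p)) • Tn O f g h (i : ℕ) (j : ℕ) := by
        rw [iota_def, tr_sum]
        refine Finset.sum_congr rfl fun j _ => ?_
        rw [tr_smul, tr_comp, iota_def, comp_sum_left O, Finset.smul_sum]
        refine Finset.sum_congr rfl fun i _ => ?_
        rw [O.comp_smul_left, smul_smul, ← pow_add, comp_eq_Tn O f g h i j,
          Nat.add_comm ((j : ℕ) * p) ((i : ℕ) * n)]
    _ = ∑ j ∈ range (m + n + 1), ∑ i ∈ range (m + 1),
          ((-1 : k) ^ (i * n + j * p)) • Tn O f g h i j := by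
        rw [Fin.sum_univ_eq_sum_range (fun jn => ∑ i : Fin (m + 1),
          ((-1 : k) ^ ((i : ℕ) * n + jn * p)) • Tn O f g h (i : ℕ) jn)]
        exact Finset.sum_congr rfl fun j _ => Fin.sum_univ_eq_sum_range
          (fun inn => ((-1 : k) ^ (inn * n + j * p)) • Tn O f g h inn j) (m + 1)
    _ = ∑ x ∈ range (m + 1) ×ˢ range (m + n + 1),
          ((-1 : k) ^ (x.1 * n + x.2 * p)) • Tn O f g h x.1 x.2 := by
        rw [Finset.sum_product]
        exact Finset.sum_comm

theorem expandB {m n p : ℕ} (f : Q m) (g : Q n) (h : Q p) :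
    O.iota (O.iota h g) f =
      ∑ x ∈ range (m + 1) ×ˢ range (n + 1),
        ((-1 : k) ^ (x.1 * (n + p) + x.2 * p)) • Tn O f g h x.1 (x.1 + x.2) := by
  calc O.iota (O.iota h g) f
      = ∑ i : Fin (m + 1), ∑ j : Fin (n + 1),
          ((-1 : k) ^ ((i : ℕ) * (n + p) + (j : ℕ) * p)) •
            Tn O f g h (i : ℕ) ((i : ℕ) + (j : ℕ)) := by
        rw [iota_def]
        refine Finset.sum_congr rfl fun i _ => ?_
        rw [iota_def, comp_sum_right O, Finset.smul_sum]
        refine Finset.sum_congr rfl fun j _ => ?_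
        rw [O.comp_smul_right, smul_smul, ← pow_add, seqT O f g h i j]
    _ = ∑ i ∈ range (m + 1), ∑ j ∈ range (n + 1),
          ((-1 : k) ^ (i * (n + p) + j * p)) • Tn O f g h i (i + j) := by
        rw [Fin.sum_univ_eq_sum_range (fun inn => ∑ j : Fin (n + 1),
          ((-1 : k) ^ (inn * (n + p) + (j : ℕ) * p)) • Tn O f g h inn (inn + (j : ℕ)))]
        exact Finset.sum_congr rfl fun i _ => Fin.sum_univ_eq_sum_range
          (fun jn => ((-1 : k) ^ (i * (n + p) + jn * p)) • Tn O f g h i (i + jn)) (n + 1)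
    _ = ∑ x ∈ range (m + 1) ×ˢ range (n + 1),
          ((-1 : k) ^ (x.1 * (n + p) + x.2 * p)) • Tn O f g h x.1 (x.1 + x.2) := by
        rw [Finset.sum_product]

theorem expandC {m n p : ℕ} (f : Q m) (g : Q n) (h : Q p) (e : m + p + n = m + (n + p)) :
    tr e (O.iota g (O.iota h f)) =
      ∑ y ∈ range (m + 1) ×ˢ range (m + p + 1),
        ((-1 : k) ^ (y.1 * p + y.2 * n)) • Un O f g h y.1 y.2 := by
  calc tr e (O.iota g (O.iota h f))
      = ∑ j : Fin (m + p + 1), ∑ i : Fin (m + 1),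
          ((-1 : k) ^ ((i : ℕ) * p + (j : ℕ) * n)) • Un O f g h (i : ℕ) (j : ℕ) := by
        rw [iota_def, tr_sum]
        refine Finset.sum_congr rfl fun j _ => ?_
        rw [tr_smul, tr_comp, iota_def, comp_sum_left O, Finset.smul_sum]
        refine Finset.sum_congr rfl fun i _ => ?_
        rw [O.comp_smul_left, smul_smul, ← pow_add, comp_eq_Un O f g h i j,
          Nat.add_comm ((j : ℕ) * n) ((i : ℕ) * p)]
    _ = ∑ j ∈ range (m + p + 1), ∑ i ∈ range (m + 1),
          ((-1 : k) ^ (i * p + j * n)) • Un O f g h i j := by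
        rw [Fin.sum_univ_eq_sum_range (fun jn => ∑ i : Fin (m + 1),
          ((-1 : k) ^ ((i : ℕ) * p + jn * n)) • Un O f g h (i : ℕ) jn)]
        exact Finset.sum_congr rfl fun j _ => Fin.sum_univ_eq_sum_range
          (fun inn => ((-1 : k) ^ (inn * p + j * n)) • Un O f g h inn j) (m + 1)
    _ = ∑ y ∈ range (m + 1) ×ˢ range (m + p + 1),
          ((-1 : k) ^ (y.1 * p + y.2 * n)) • Un O f g h y.1 y.2 := by
        rw [Finset.sum_product]
        exact Finset.sum_comm

theorem expandD {m n p : ℕ} (f : Q m) (g : Q n) (h : Q p) (e : m + (p + n) = m + (n + p)) :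
    tr e (O.iota (O.iota g h) f) =
      ∑ y ∈ range (m + 1) ×ˢ range (p + 1),
        ((-1 : k) ^ (y.1 * (p + n) + y.2 * n)) • Un O f g h y.1 (y.1 + y.2) := by
  calc tr e (O.iota (O.iota g h) f)
      = ∑ i : Fin (m + 1), ∑ j : Fin (p + 1),
          ((-1 : k) ^ ((i : ℕ) * (p + n) + (j : ℕ) * n)) •
            Un O f g h (i : ℕ) ((i : ℕ) + (j : ℕ)) := by
        rw [iota_def, tr_sum]
        refine Finset.sum_congr rfl fun i _ => ?_
        rw [tr_smul, tr_comp, iota_def, comp_sum_right O, Finset.smul_sum]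
        refine Finset.sum_congr rfl fun j _ => ?_
        rw [O.comp_smul_right, smul_smul, ← pow_add, seqU O f g h _ i j]
    _ = ∑ i ∈ range (m + 1), ∑ j ∈ range (p + 1),
          ((-1 : k) ^ (i * (p + n) + j * n)) • Un O f g h i (i + j) := by
        rw [Fin.sum_univ_eq_sum_range (fun inn => ∑ j : Fin (p + 1),
          ((-1 : k) ^ (inn * (p + n) + (j : ℕ) * n)) • Un O f g h inn (inn + (j : ℕ)))]
        exact Finset.sum_congr rfl fun i _ => Fin.sum_univ_eq_sum_range
          (fun jn => ((-1 : k) ^ (i * (p + n) + jn * n)) • Un O f g h i (i + jn)) (p + 1)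
    _ = ∑ y ∈ range (m + 1) ×ˢ range (p + 1),
          ((-1 : k) ^ (y.1 * (p + n) + y.2 * n)) • Un O f g h y.1 (y.1 + y.2) := by
        rw [Finset.sum_product]

end PreLieAux

open Finset PreLieAux


theorem pre_lie_identity_of_contraction {k : Type*} [Field k] {Q : ℕ → Type*}
    [∀ n, AddCommGroup (Q n)] [∀ n, Module k (Q n)] (O : NSOperad k Q)
    {m n p : ℕ} (f : Q m) (g : Q n) (h : Q p) :
    tr (by omega : m + n + p = m + (n + p)) (O.iota h (O.iota g f)) - O.iota (O.iota h g) f =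
      ((-1 : k) ^ (n * p)) •
        (tr (by omega : m + p + n = m + (n + p)) (O.iota g (O.iota h f)) -
          tr (by omega : m + (p + n) = m + (n + p)) (O.iota (O.iota g h) f)) := by
  rw [expandA O f g h, expandB O f g h, expandC O f g h, expandD O f g h]
  have hdiagT :
      ∑ x ∈ (range (m + 1) ×ˢ range (m + n + 1)).filter
          (fun x => ¬(x.2 < x.1 ∨ x.1 + n < x.2)),
        ((-1 : k) ^ (x.1 * n + x.2 * p)) • Tn O f g h x.1 x.2
      = ∑ x ∈ range (m + 1) ×ˢ range (n + 1),
          ((-1 : k) ^ (x.1 * (n + p) + x.2 * p)) • Tn O f g h x.1 (x.1 + x.2) := by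
    refine Finset.sum_nbij' (fun x => (x.1, x.2 - x.1)) (fun y => (y.1, y.1 + y.2))
      ?_ ?_ ?_ ?_ ?_
    · rintro ⟨a, b⟩ hx
      simp only [Finset.mem_filter, Finset.mem_product, Finset.mem_range, not_or,
        not_lt] at hx
      simp only [Finset.mem_product, Finset.mem_range]
      omega
    · rintro ⟨a, b⟩ hy
      simp only [Finset.mem_product, Finset.mem_range] at hy
      simp only [Finset.mem_filter, Finset.mem_product, Finset.mem_range, not_or, not_lt]
      omega
    · rintro ⟨a, b⟩ hx
      simp only [Finset.mem_filter, Finset.mem_product, Finset.mem_range, not_or,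
        not_lt] at hx
      simp only [Prod.mk.injEq, true_and, and_true]
      omega
    · rintro ⟨a, b⟩ hy
      simp only [Finset.mem_product, Finset.mem_range] at hy
      simp only [Prod.mk.injEq, true_and, and_true]
      omega
    · rintro ⟨a, b⟩ hx
      simp only [Finset.mem_filter, Finset.mem_product, Finset.mem_range, not_or,
        not_lt] at hx
      obtain ⟨c, rfl⟩ : ∃ c, b = a + c := ⟨b - a, by omega⟩
      simp only [Nat.add_sub_cancel_left]
      rw [show a * n + (a + c) * p = a * (n + p) + c * p by ring]
  have hdiagU :
      ∑ y ∈ (range (m + 1) ×ˢ range (m + p + 1)).filter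
          (fun y => ¬(y.2 < y.1 ∨ y.1 + p < y.2)),
        ((-1 : k) ^ (y.1 * p + y.2 * n)) • Un O f g h y.1 y.2
      = ∑ y ∈ range (m + 1) ×ˢ range (p + 1),
          ((-1 : k) ^ (y.1 * (p + n) + y.2 * n)) • Un O f g h y.1 (y.1 + y.2) := by
    refine Finset.sum_nbij' (fun y => (y.1, y.2 - y.1)) (fun y => (y.1, y.1 + y.2))
      ?_ ?_ ?_ ?_ ?_
    · rintro ⟨a, b⟩ hx
      simp only [Finset.mem_filter, Finset.mem_product, Finset.mem_range, not_or,
        not_lt] at hx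
      simp only [Finset.mem_product, Finset.mem_range]
      omega
    · rintro ⟨a, b⟩ hy
      simp only [Finset.mem_product, Finset.mem_range] at hy
      simp only [Finset.mem_filter, Finset.mem_product, Finset.mem_range, not_or, not_lt]
      omega
    · rintro ⟨a, b⟩ hx
      simp only [Finset.mem_filter, Finset.mem_product, Finset.mem_range, not_or,
        not_lt] at hx
      simp only [Prod.mk.injEq, true_and, and_true]
      omega
    · rintro ⟨a, b⟩ hy
      simp only [Finset.mem_product, Finset.mem_range] at hy
      simp only [Prod.mk.injEq, true_and, and_true]
      omega
    · rintro ⟨a, b⟩ hx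
      simp only [Finset.mem_filter, Finset.mem_product, Finset.mem_range, not_or,
        not_lt] at hx
      obtain ⟨c, rfl⟩ : ∃ c, b = a + c := ⟨b - a, by omega⟩
      simp only [Nat.add_sub_cancel_left]
      rw [show a * p + (a + c) * n = a * (p + n) + c * n by ring]
  have hkey :
      ∑ x ∈ (range (m + 1) ×ˢ range (m + n + 1)).filter
          (fun x => x.2 < x.1 ∨ x.1 + n < x.2),
        ((-1 : k) ^ (x.1 * n + x.2 * p)) • Tn O f g h x.1 x.2
      = ∑ y ∈ (range (m + 1) ×ˢ range (m + p + 1)).filter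
          (fun y => y.2 < y.1 ∨ y.1 + p < y.2),
        ((-1 : k) ^ (n * p + (y.1 * p + y.2 * n))) • Un O f g h y.1 y.2 := by
    refine Finset.sum_nbij'
      (fun x => if x.2 < x.1 then (x.2, x.1 + p) else (x.2 - n, x.1))
      (fun y => if y.2 < y.1 then (y.2, y.1 + n) else (y.2 - p, y.1))
      ?_ ?_ ?_ ?_ ?_
    · rintro ⟨a, b⟩ hx
      simp only [Finset.mem_filter, Finset.mem_product, Finset.mem_range] at hx
      by_cases hc : b < a
      · simp only [if_pos hc, Finset.mem_filter, Finset.mem_product, Finset.mem_range]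
        omega
      · simp only [if_neg hc, Finset.mem_filter, Finset.mem_product, Finset.mem_range]
        omega
    · rintro ⟨a, b⟩ hy
      simp only [Finset.mem_filter, Finset.mem_product, Finset.mem_range] at hy
      by_cases hc : b < a
      · simp only [if_pos hc, Finset.mem_filter, Finset.mem_product, Finset.mem_range]
        omega
      · simp only [if_neg hc, Finset.mem_filter, Finset.mem_product, Finset.mem_range]
        omega
    · rintro ⟨a, b⟩ hx
      simp only [Finset.mem_filter, Finset.mem_product, Finset.mem_range] at hx
      by_cases hc : b < a
      · simp only [if_pos hc, if_neg (show ¬ (a + p < b) by omega), Prod.mk.injEq, true_and, and_true]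
        omega
      · simp only [if_neg hc, if_pos (show a < b - n by omega), Prod.mk.injEq, true_and, and_true]
        omega
    · rintro ⟨a, b⟩ hy
      simp only [Finset.mem_filter, Finset.mem_product, Finset.mem_range] at hy
      by_cases hc : b < a
      · simp only [if_pos hc, if_neg (show ¬ (a + n < b) by omega), Prod.mk.injEq, true_and, and_true]
        omega
      · simp only [if_neg hc, if_pos (show a < b - p by omega), Prod.mk.injEq, true_and, and_true]
        omega
    · rintro ⟨a, b⟩ hx
      simp only [Finset.mem_filter, Finset.mem_product, Finset.mem_range] at hx
      by_cases hc : b < a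
      · simp only [if_pos hc]
        rw [← par2 O f g h (show b < m + 1 by omega) (show a < m + 1 by omega) hc]
        rw [show n * p + (b * p + (a + p) * n) = (a * n + b * p) + 2 * (n * p) by ring]
        rw [pow_neg_one_add_two_mul]
      · simp only [if_neg hc]
        have hc2 : a + n < b := by tauto
        obtain ⟨c, rfl⟩ : ∃ c, b = c + n := ⟨b - n, by omega⟩
        simp only [Nat.add_sub_cancel]
        rw [← par1 O f g h (show a < m + 1 by omega) (show c < m + 1 by omega)
          (show a < c by omega)]
        rw [show n * p + (c * p + a * n) = a * n + (c + n) * p by ring]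
  rw [← Finset.sum_filter_add_sum_filter_not (range (m + 1) ×ˢ range (m + n + 1))
      (fun x => x.2 < x.1 ∨ x.1 + n < x.2)
      (fun x => ((-1 : k) ^ (x.1 * n + x.2 * p)) • Tn O f g h x.1 x.2),
    ← Finset.sum_filter_add_sum_filter_not (range (m + 1) ×ˢ range (m + p + 1))
      (fun y => y.2 < y.1 ∨ y.1 + p < y.2)
      (fun y => ((-1 : k) ^ (y.1 * p + y.2 * n)) • Un O f g h y.1 y.2),
    ← hdiagT, ← hdiagU, add_sub_cancel_right, add_sub_cancel_right, hkey,
    Finset.smul_sum]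
  refine Finset.sum_congr rfl fun y _ => ?_
  rw [smul_smul, ← pow_add]
end

section
/- Let P be a nonsymmetric operad. Then the graded space P_{•+1} = ⊕_{n≥0} P_{n+1} equipped with the bracket [f,g]_GV := ι_f g − (-1)^{mn} ι_g f (for f ∈ P_{m+1}, g ∈ P_{n+1}) satisfies the graded Jacobi identity, and hence is a graded Lie algebra. -/
open NSOperad

/-!
Write `f ∘ g := ι_g f`, so that `[f, g]_GV = g ∘ f - (-1)^{mn} f ∘ g`. Expanding `ι_h ι_g f` over
pairs of insertion positions, sequential associativity collects the terms in which `h` is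
inserted into `g` into `ι_{ι_h g} f`, while parallel associativity matches the remaining terms,
where `g` and `h` occupy different inputs of `f`, with those of `ι_g ι_h f` up to the sign
`(-1)^{|g||h|}`. Hence `∘` is graded right pre-Lie, and the graded Jacobi identity for its graded
commutator is a formal consequence.
-/

lemma Finset.sum_range_eq_add_Ico_add {M : Type*} [AddCommMonoid M] (F : ℕ → M) {i a : ℕ}
    (hi : i ≤ a) (b : ℕ) :
    ∑ j ∈ Finset.range (a + b + 1), F j
      = ∑ j ∈ Finset.range i, F j + ∑ t ∈ Finset.range (b + 1), F (i + t)
        + ∑ j ∈ Finset.Ico (i + 1) (a + 1), F (j + b) := by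
  rw [Finset.range_eq_Ico, ← Finset.sum_Ico_consecutive F (Nat.zero_le (i + b + 1)) (by omega),
    ← Finset.sum_Ico_consecutive F (Nat.zero_le i) (by omega), ← Finset.range_eq_Ico,
    Finset.sum_Ico_eq_sum_range, Finset.sum_Ico_eq_sum_range, Finset.sum_Ico_eq_sum_range,
    show i + b + 1 - i = b + 1 by omega, show a + b + 1 - (i + b + 1) = a + 1 - (i + 1) by omega]
  exact congrArg _ (Finset.sum_congr rfl fun t _ => congrArg F (by omega))

lemma neg_one_pow_add_two_mul {R : Type*} [Monoid R] [HasDistribNeg R] (n t : ℕ) :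
    (-1 : R) ^ (n + 2 * t) = (-1) ^ n := by
  rw [pow_add, pow_mul, neg_one_sq, one_pow, mul_one]

namespace NSOperad

variable {k : Type*} {Q : ℕ → Type*}

lemma tr_self {i : ℕ} (h : i = i) (x : Q i) : tr h x = x := rfl

variable [Field k] [∀ n, AddCommGroup (Q n)] [∀ n, Module k (Q n)] (O : NSOperad k Q)

/-- Partial composition at a position `i : ℕ`, extended by `0` for `i > m`; this lets
contractions be written as sums over `Finset.range`, where splitting and reindexing is easy. -/
def compAt {m n p : ℕ} (e : m + n = p) (i : ℕ) : Q m →ₗ[k] Q n →ₗ[k] Q p :=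
  LinearMap.mk₂ k (fun f g => if hi : i < m + 1 then O.comp e f ⟨i, hi⟩ g else 0)
    (fun f f' g => by split <;> simp [O.comp_add_left])
    (fun r f g => by split <;> simp [O.comp_smul_left])
    (fun f g g' => by split <;> simp [O.comp_add_right])
    (fun r f g => by split <;> simp [O.comp_smul_right])

lemma compAt_of_lt {m n p : ℕ} (e : m + n = p) {i : ℕ} (hi : i < m + 1) (f : Q m) (g : Q n) :
    O.compAt e i f g = O.comp e f ⟨i, hi⟩ g := dif_pos hi

lemma compAt_compAt_of_le {m n l q r p : ℕ} (h0 : n + l = q) (h1 : m + q = p) (h2 : m + n = r)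
    (h3 : r + l = p) (f : Q m) (g : Q n) (x : Q l) {i j : ℕ} (hi : i ≤ m) (hj : j ≤ n) :
    O.compAt h1 i f (O.compAt h0 j g x) = O.compAt h3 (i + j) (O.compAt h2 i f g) x := by
  rw [O.compAt_of_lt h0 (by omega), O.compAt_of_lt h1 (by omega), O.compAt_of_lt h2 (by omega),
    O.compAt_of_lt h3 (by omega)]
  exact O.assoc_seq h0 h1 h2 h3 f g x ⟨i, by omega⟩ ⟨j, by omega⟩

lemma compAt_compAt_of_lt {m n l r s p : ℕ} (h2 : m + n = r) (h3 : r + l = p) (h4 : m + l = s)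
    (h5 : s + n = p) (f : Q m) (g : Q n) (x : Q l) {i j : ℕ} (hij : i < j) (hj : j ≤ m) :
    O.compAt h3 (j + n) (O.compAt h2 i f g) x = O.compAt h5 i (O.compAt h4 j f x) g := by
  rw [O.compAt_of_lt h2 (by omega), O.compAt_of_lt h3 (by omega), O.compAt_of_lt h4 (by omega),
    O.compAt_of_lt h5 (by omega)]
  exact O.assoc_par h2 h3 h4 h5 f g x ⟨i, by omega⟩ ⟨j, by omega⟩ hij

/-- The contraction `ι` as a bilinear map, with a free target degree so that no `tr` is needed. -/
def iotaN {m n p : ℕ} (e : m + n = p) : Q n →ₗ[k] Q m →ₗ[k] Q p :=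
  ∑ i ∈ Finset.range (m + 1), ((-1 : k) ^ (i * n)) • (O.compAt e i).flip

lemma iotaN_apply {m n p : ℕ} (e : m + n = p) (g : Q n) (f : Q m) :
    O.iotaN e g f = ∑ i ∈ Finset.range (m + 1), ((-1 : k) ^ (i * n)) • O.compAt e i f g := by
  simp [iotaN, LinearMap.sum_apply]

lemma tr_iota {m n p : ℕ} (e : m + n = p) (g : Q n) (f : Q m) :
    tr e (O.iota g f) = O.iotaN e g f := by
  subst e
  rw [tr_self, iotaN_apply, iota, ← Fin.sum_univ_eq_sum_range]
  simp only [O.compAt_of_lt rfl (Fin.is_lt _)]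

lemma iota_eq_iotaN {m n : ℕ} (g : Q n) (f : Q m) : O.iota g f = O.iotaN rfl g f :=
  O.tr_iota rfl g f

section Contraction

variable {a b c r : ℕ} (e : a + b + c = r) (f : Q a) (g : Q b) (h : Q c)

def twoComp (i j : ℕ) : Q r :=
  ((-1 : k) ^ (j * c + i * b)) • O.compAt e j (O.compAt rfl i f g) h

/-- The terms of `ι_h ι_g f` in which `h` is inserted into an input of `f` to the right of `g`. -/
def disjointComp : Q r :=
  ∑ i ∈ Finset.range (a + 1), ∑ j ∈ Finset.Ico (i + 1) (a + 1), O.twoComp e f g h i (j + b)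

lemma iotaN_iota_eq_sum_twoComp :
    O.iotaN e h (O.iota g f)
      = ∑ i ∈ Finset.range (a + 1), ∑ j ∈ Finset.range (a + b + 1), O.twoComp e f g h i j := by
  rw [Finset.sum_comm, iotaN_apply, iota_eq_iotaN, iotaN_apply]
  simp only [map_sum, map_smul, LinearMap.sum_apply, LinearMap.smul_apply, Finset.smul_sum,
    smul_smul, ← pow_add, twoComp]

lemma sum_twoComp_nested {i : ℕ} (hi : i ≤ a) :
    ∑ t ∈ Finset.range (b + 1), O.twoComp e f g h i (i + t)
      = ((-1 : k) ^ (i * (b + c))) • O.compAt (by omega : a + (b + c) = r) i f (O.iota h g) := by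
  rw [iota_eq_iotaN, iotaN_apply, map_sum, Finset.smul_sum]
  refine Finset.sum_congr rfl fun t ht => ?_
  rw [twoComp, ← O.compAt_compAt_of_le rfl (by omega) rfl e f g h hi
    (Finset.mem_range_succ_iff.mp ht), map_smul, smul_smul, ← pow_add]
  rw [show (i + t) * c + i * b = i * (b + c) + t * c by ring]

lemma sum_twoComp_below :
    ∑ i ∈ Finset.range (a + 1), ∑ j ∈ Finset.range i, O.twoComp e f g h i j
      = ((-1 : k) ^ (b * c)) • O.disjointComp (by omega : a + c + b = r) f h g := by
  simp only [disjointComp, Finset.range_eq_Ico]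
  rw [← Finset.sum_Ico_Ico_comm', Finset.smul_sum]
  refine Finset.sum_congr rfl fun j _ => ?_
  rw [Finset.smul_sum]
  refine Finset.sum_congr rfl fun i hi => ?_
  rw [Finset.mem_Ico] at hi
  rw [twoComp, twoComp, O.compAt_compAt_of_lt rfl _ rfl e f h g hi.1 (by omega), smul_smul,
    ← pow_add, show b * c + ((i + c) * b + j * c) = j * c + i * b + 2 * (b * c) by ring,
    neg_one_pow_add_two_mul]

lemma iotaN_iota_sub_iotaN_iota :
    O.iotaN e h (O.iota g f) - O.iotaN (by omega : a + (b + c) = r) (O.iota h g) f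
      = O.disjointComp e f g h
        + ((-1 : k) ^ (b * c)) • O.disjointComp (by omega : a + c + b = r) f h g := by
  have split : ∀ i ∈ Finset.range (a + 1),
      ∑ j ∈ Finset.range (a + b + 1), O.twoComp e f g h i j
        = ∑ j ∈ Finset.range i, O.twoComp e f g h i j
          + ((-1 : k) ^ (i * (b + c))) • O.compAt (by omega : a + (b + c) = r) i f (O.iota h g)
          + ∑ j ∈ Finset.Ico (i + 1) (a + 1), O.twoComp e f g h i (j + b) := fun i hi => by
    have hia : i ≤ a := Finset.mem_range_succ_iff.mp hi
    rw [Finset.sum_range_eq_add_Ico_add _ hia, O.sum_twoComp_nested e f g h hia]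
  rw [iotaN_iota_eq_sum_twoComp, Finset.sum_congr rfl split, Finset.sum_add_distrib,
    Finset.sum_add_distrib, sum_twoComp_below, iotaN_apply, disjointComp]
  abel

/-- The associator of `f ∘ g := ι_g f` is graded symmetric in its last two arguments. -/
lemma iota_preLie :
    ((-1 : k) ^ (b * c)) •
        (O.iotaN e h (O.iota g f) - O.iotaN (by omega : a + (b + c) = r) (O.iota h g) f)
      = O.iotaN (by omega : a + c + b = r) g (O.iota h f)
        - O.iotaN (by omega : a + (c + b) = r) (O.iota g h) f := by
  rw [iotaN_iota_sub_iotaN_iota, iotaN_iota_sub_iotaN_iota, smul_add, smul_smul, ← pow_add,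
    mul_comm c b, ← two_mul, (even_two_mul _).neg_one_pow, one_smul, add_comm]

end Contraction

lemma iotaN_tr_left {m n n' p : ℕ} (e : m + n' = p) (e0 : n = n') (g : Q n) (f : Q m) :
    O.iotaN e (tr e0 g) f = O.iotaN (by omega) g f := by
  subst e0; rfl

lemma iotaN_tr_right {m m' n p : ℕ} (e : m' + n = p) (e0 : m = m') (g : Q n) (f : Q m) :
    O.iotaN e g (tr e0 f) = O.iotaN (by omega) g f := by
  subst e0; rfl

lemma tr_gv {m n r : ℕ} (e : m + n = r) (x : Q m) (y : Q n) :
    tr e (O.gv x y)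
      = O.iotaN (by omega) x y - ((-1 : k) ^ (m * n)) • O.iotaN e y x := by
  subst e
  rw [tr_self, gv, tr_iota, iota_eq_iotaN]

lemma gv_antisymm {a b : ℕ} (f : Q a) (g : Q b) :
    O.gv f g = -(((-1 : k) ^ (a * b)) • tr (by omega) (O.gv g f)) := by
  rw [← tr_self rfl (O.gv f g), tr_gv, tr_gv, smul_sub, smul_smul, ← pow_add, mul_comm b a,
    ← two_mul, (even_two_mul _).neg_one_pow, one_smul, neg_sub]

section Jacobi

variable {a b c r : ℕ} (e : a + b + c = r) (f : Q a) (g : Q b) (h : Q c)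

lemma smul_tr_gv_gv :
    ((-1 : k) ^ (a * c)) • tr e (O.gv (O.gv f g) h)
      = ((-1 : k) ^ (a * c)) • O.iotaN (by omega : c + (b + a) = r) (O.iota f g) h
        - ((-1 : k) ^ (a * c + a * b)) • O.iotaN (by omega : c + (a + b) = r) (O.iota g f) h
        - ((-1 : k) ^ (b * c)) • O.iotaN (by omega : b + a + c = r) h (O.iota f g)
        + ((-1 : k) ^ (b * c + a * b)) • O.iotaN e h (O.iota g f) := by
  rw [tr_gv, gv]
  simp only [map_sub, map_smul, LinearMap.sub_apply, LinearMap.smul_apply,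
    iotaN_tr_left, iotaN_tr_right, smul_sub, smul_smul, ← pow_add]
  rw [show a * c + (a + b) * c = b * c + 2 * (a * c) by ring,
    show a * c + ((a + b) * c + a * b) = b * c + a * b + 2 * (a * c) by ring,
    neg_one_pow_add_two_mul, neg_one_pow_add_two_mul]
  abel

lemma gv_jacobi :
    ((-1 : k) ^ (a * c)) • tr e (O.gv (O.gv f g) h)
      + ((-1 : k) ^ (b * a)) • tr (by omega : b + c + a = r) (O.gv (O.gv g h) f)
      + ((-1 : k) ^ (c * b)) • tr (by omega : c + a + b = r) (O.gv (O.gv h f) g) = 0 := by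
  rw [smul_tr_gv_gv, smul_tr_gv_gv, smul_tr_gv_gv]
  linear_combination (norm := module)
    ((-1 : k) ^ (a * b)) • O.iota_preLie e f g h
      + ((-1 : k) ^ (b * c)) • O.iota_preLie (by omega : b + c + a = r) g h f
      + ((-1 : k) ^ (c * a)) • O.iota_preLie (by omega : c + a + b = r) h f g

end Jacobi

end NSOperad

theorem gv_bracket_graded_lie {k : Type*} [Field k] {Q : ℕ → Type*}
    [∀ n, AddCommGroup (Q n)] [∀ n, Module k (Q n)] (O : NSOperad k Q)
    {a b c : ℕ} (f : Q a) (g : Q b) (h : Q c) :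
    O.gv f g = -(((-1 : k) ^ (a * b)) • tr (by omega : b + a = a + b) (O.gv g f)) ∧
    ((-1 : k) ^ (a * c)) • tr (by omega : a + b + c = a + b + c) (O.gv (O.gv f g) h) +
      ((-1 : k) ^ (b * a)) • tr (by omega : b + c + a = a + b + c) (O.gv (O.gv g h) f) +
      ((-1 : k) ^ (c * b)) • tr (by omega : c + a + b = a + b + c) (O.gv (O.gv h f) g) = 0 :=
  ⟨O.gv_antisymm f g, O.gv_jacobi rfl f g h⟩
end

section
/- Let P be a nonsymmetric operad with multiplication π. Define θ(f) := −ι_f π = −π ∘_1 f + (-1)^n π ∘_2 f for f ∈ P_n, and the cup bracket [f,g]_π := f ∪_π g − (-1)^{mn} g ∪_π f. Then for f ∈ P_m and g ∈ P_n one has [f,g]_π = (-1)^n ( ι_f(θ g) − θ(ι_f g) ). -/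
open NSOperad


set_option linter.unusedSectionVars false
namespace NSOperad
section Aux

variable {k : Type*} [Field k] {Q : ℕ → Type*}
  [∀ n, AddCommGroup (Q n)] [∀ n, Module k (Q n)] (O : NSOperad k Q)

lemma tr_smul {i j : ℕ} (h : i = j) (a : k) (x : Q i) :
    tr h (a • x) = a • tr h x := by subst h; rfl

lemma tr_neg {i j : ℕ} (h : i = j) (x : Q i) : tr h (-x) = -tr h x := by subst h; rfl

lemma tr_sub {i j : ℕ} (h : i = j) (x y : Q i) : tr h (x - y) = tr h x - tr h y := by
  subst h; rfl

lemma tr_sum {α : Type*} (s : Finset α) {i j : ℕ} (h : i = j) (F : α → Q i) :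
    tr h (∑ a ∈ s, F a) = ∑ a ∈ s, tr h (F a) := by subst h; rfl

lemma tr_comp {m n p p' : ℕ} (h : m + n = p) (h' : p = p') (f : Q m) (i : Fin (m + 1))
    (g : Q n) : tr h' (O.comp h f i g) = O.comp (h.trans h') f i g := by subst h'; rfl

lemma comp_trL {a b n p : ℕ} (e : a = b) (h : b + n = p) (f : Q a)
    (i : Fin (b + 1)) (g : Q n) :
    O.comp h (tr e f) i g = O.comp (by omega) f (Fin.cast (by omega) i) g := by subst e; rfl

lemma comp_neg_left {m n p : ℕ} (h : m + n = p) (f : Q m) (i : Fin (m + 1)) (g : Q n) :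
    O.comp h (-f) i g = -O.comp h f i g := by
  rw [← neg_one_smul k f, O.comp_smul_left, neg_one_smul]

/-- Left composition as a linear map. -/
def compL {m n p : ℕ} (h : m + n = p) (i : Fin (m + 1)) (g : Q n) : Q m →ₗ[k] Q p where
  toFun f := O.comp h f i g
  map_add' x y := O.comp_add_left h x y i g
  map_smul' a x := O.comp_smul_left h a x i g

@[simp] lemma compL_apply {m n p : ℕ} (h : m + n = p) (i : Fin (m + 1)) (g : Q n)
    (f : Q m) : O.compL h i g f = O.comp h f i g := rfl

lemma comp_sum_left {α : Type*} (s : Finset α) {m n p : ℕ} (h : m + n = p)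
    (F : α → Q m) (i : Fin (m + 1)) (g : Q n) :
    O.comp h (∑ a ∈ s, F a) i g = ∑ a ∈ s, O.comp h (F a) i g :=
  map_sum (O.compL h i g) F s

lemma comp_index_congr {m n p : ℕ} (h : m + n = p) (f : Q m) {i i' : Fin (m + 1)}
    (e : i = i') (g : Q n) : O.comp h f i g = O.comp h f i' g := by rw [e]


lemma tr_tr {i j l : ℕ} (h : i = j) (h' : j = l) (x : Q i) :
    tr h' (tr h x) = tr (h.trans h') x := by subst h; subst h'; rfl

/-- Right composition as a linear map. -/
def compR {m n p : ℕ} (h : m + n = p) (f : Q m) (i : Fin (m + 1)) : Q n →ₗ[k] Q p where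
  toFun g := O.comp h f i g
  map_add' x y := O.comp_add_right h f i x y
  map_smul' a x := O.comp_smul_right h a f i x

@[simp] lemma compR_apply {m n p : ℕ} (h : m + n = p) (f : Q m) (i : Fin (m + 1))
    (g : Q n) : O.compR h f i g = O.comp h f i g := rfl

lemma comp_sum_right {α : Type*} (s : Finset α) {m n p : ℕ} (h : m + n = p)
    (f : Q m) (i : Fin (m + 1)) (F : α → Q n) :
    O.comp h f i (∑ a ∈ s, F a) = ∑ a ∈ s, O.comp h f i (F a) :=
  map_sum (O.compR h f i) F s

lemma tr_add {i j : ℕ} (h : i = j) (x y : Q i) : tr h (x + y) = tr h x + tr h y := by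
  subst h; rfl

lemma sum_fin_two {p : ℕ} (G : Fin (1 + 1) → Q p) : ∑ i, G i = G 0 + G 1 :=
  Fin.sum_univ_two G

lemma theta_expand {d p : ℕ} (π : Q 1) (F : Q d) (e : d + 1 = p) (h : 1 + d = p) :
    tr e (O.theta π F) = -O.comp h π 0 F - ((-1 : k) ^ d) • O.comp h π 1 F := by
  simp only [theta, iota, tr_neg, tr_tr]
  rw [sum_fin_two]
  simp only [tr_add, tr_smul, O.tr_comp, show ((1 : Fin (1 + 1)) : ℕ) = 1 from rfl,
    show ((0 : Fin (1 + 1)) : ℕ) = 0 from rfl, zero_mul, one_mul, pow_zero, one_smul,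
    neg_add]
  abel
lemma expandY (π : Q 1) {m n : ℕ} (f : Q m) (g : Q n) (e : n + m + 1 = m + n + 1) :
    tr e (O.theta π (O.iota f g)) =
      -(∑ j : Fin (n + 1), ((-1 : k) ^ ((j : ℕ) * m)) •
          O.comp (by omega : 1 + (n + m) = m + n + 1) π 0 (O.comp rfl g j f))
      - ∑ j : Fin (n + 1), ((-1 : k) ^ (n + m + (j : ℕ) * m)) •
          O.comp (by omega : 1 + (n + m) = m + n + 1) π 1 (O.comp rfl g j f) := by
  rw [O.theta_expand π (O.iota f g) e (by omega)]
  simp only [iota, O.comp_sum_right, O.comp_smul_right, Finset.smul_sum, smul_smul, pow_add]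

lemma seqA {p : ℕ} (π : Q 1) {m n : ℕ} (f : Q m) (g : Q n) (h2 : 1 + n + m = p)
    (h01 : 1 + (n + m) = p) (i' : Fin (1 + n + 1)) (j : Fin (n + 1)) (hv : (i' : ℕ) = j) :
    O.comp h2 (O.comp rfl π 0 g) i' f = O.comp h01 π 0 (O.comp rfl g j f) := by
  rw [O.assoc_seq rfl h01 rfl h2 π g f 0 j]
  exact O.comp_index_congr h2 _ (Fin.ext (by simp [hv])) f

lemma seqB {p : ℕ} (π : Q 1) {m n : ℕ} (f : Q m) (g : Q n) (h2 : 1 + n + m = p)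
    (h01 : 1 + (n + m) = p) (i' : Fin (1 + n + 1)) (j : Fin (n + 1))
    (hv : (i' : ℕ) = (j : ℕ) + 1) :
    O.comp h2 (O.comp rfl π 1 g) i' f = O.comp h01 π 1 (O.comp rfl g j f) := by
  rw [O.assoc_seq rfl h01 rfl h2 π g f 1 j]
  exact O.comp_index_congr h2 _ (Fin.ext (by simp [hv]; omega)) f

lemma parA {p : ℕ} (π : Q 1) {m n : ℕ} (f : Q m) (g : Q n) (h2 : 1 + n + m = p)
    (hGF : 1 + m + n = p) (i' : Fin (1 + n + 1)) (hv : (i' : ℕ) = n + 1) :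
    O.comp h2 (O.comp rfl π 0 g) i' f = O.comp hGF (O.comp rfl π 1 f) 0 g := by
  have := O.assoc_par rfl h2 rfl hGF π g f 0 1 (by norm_num)
  rw [show (0 : Fin (1 + m + 1)) = ⟨(0 : Fin 2).val, by omega⟩ from Fin.ext (by simp)]
  rw [← this]
  exact O.comp_index_congr h2 _ (Fin.ext (by simp [hv]; omega)) f

lemma expandX (π : Q 1) {m n : ℕ} (f : Q m) (g : Q n) (e : n + 1 + m = m + n + 1) :
    tr e (O.iota f (O.theta π g)) =
      -(∑ j : Fin (n + 1), ((-1 : k) ^ ((j : ℕ) * m)) •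
          O.comp (by omega : 1 + (n + m) = m + n + 1) π 0 (O.comp rfl g j f))
      - ((-1 : k) ^ ((n + 1) * m)) •
          O.comp (by omega : 1 + m + n = m + n + 1) (O.comp rfl π 1 f) 0 g
      - ((-1 : k) ^ n) •
          O.comp (by omega : 1 + n + m = m + n + 1) (O.comp rfl π 1 g) 0 f
      - ∑ j : Fin (n + 1), ((-1 : k) ^ (n + m + (j : ℕ) * m)) •
          O.comp (by omega : 1 + (n + m) = m + n + 1) π 1 (O.comp rfl g j f) := by
  have h2 : 1 + n + m = m + n + 1 := by omega
  have h01 : 1 + (n + m) = m + n + 1 := by omega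
  have hGF : 1 + m + n = m + n + 1 := by omega
  have hc : n + 1 + 1 = 1 + n + 1 := by omega
  rw [iota, tr_sum]
  have step : ∀ i : Fin (n + 1 + 1),
      tr e (((-1 : k) ^ ((i : ℕ) * m)) • O.comp rfl (O.theta π g) i f) =
        -(((-1 : k) ^ ((i : ℕ) * m)) •
            O.comp h2 (O.comp rfl π 0 g) (Fin.cast hc i) f) +
        -((((-1 : k) ^ ((i : ℕ) * m)) * (-1 : k) ^ n) •
            O.comp h2 (O.comp rfl π 1 g) (Fin.cast hc i) f) := by
    intro i
    rw [tr_smul, O.tr_comp, theta, O.comp_neg_left, O.comp_trL, iota, sum_fin_two,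
      O.comp_add_left, O.comp_smul_left, O.comp_smul_left]
    simp only [show ((1 : Fin (1 + 1)) : ℕ) = 1 from rfl,
      show ((0 : Fin (1 + 1)) : ℕ) = 0 from rfl, zero_mul, one_mul, pow_zero, one_smul,
      smul_add, smul_neg, smul_smul, neg_add]
  rw [Finset.sum_congr rfl (fun i _ => step i), Finset.sum_add_distrib]
  have S1 : ∑ i : Fin (n + 1 + 1),
      -(((-1 : k) ^ ((i : ℕ) * m)) • O.comp h2 (O.comp rfl π 0 g) (Fin.cast hc i) f) =
      -((∑ j : Fin (n + 1), ((-1 : k) ^ ((j : ℕ) * m)) •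
          O.comp h01 π 0 (O.comp rfl g j f)) +
        ((-1 : k) ^ ((n + 1) * m)) • O.comp hGF (O.comp rfl π 1 f) 0 g) := by
    rw [Finset.sum_neg_distrib, Fin.sum_univ_castSucc]
    congr 1
    congr 1
    · refine Finset.sum_congr rfl fun i _ => ?_
      rw [O.seqA π f g h2 h01 _ i (by simp <;> omega)]
      simp
    · rw [O.parA π f g h2 hGF _ (by simp <;> omega)]
      simp
  have S2 : ∑ i : Fin (n + 1 + 1),
      -((((-1 : k) ^ ((i : ℕ) * m)) * (-1 : k) ^ n) •
          O.comp h2 (O.comp rfl π 1 g) (Fin.cast hc i) f) =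
      -((((-1 : k) ^ n) • O.comp h2 (O.comp rfl π 1 g) 0 f) +
        ∑ j : Fin (n + 1), ((-1 : k) ^ (n + m + (j : ℕ) * m)) •
          O.comp h01 π 1 (O.comp rfl g j f)) := by
    rw [Finset.sum_neg_distrib, Fin.sum_univ_succ]
    congr 1
    congr 1
    · have hz : Fin.cast hc (0 : Fin (n + 1 + 1)) = (0 : Fin (1 + n + 1)) :=
        Fin.ext (by simp)
      rw [hz]
      simp
    · refine Finset.sum_congr rfl fun j _ => ?_
      rw [O.seqB π f g h2 h01 (Fin.cast hc j.succ) j (by simp <;> omega)]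
      congr 1
      simp only [Fin.val_succ]
      rw [show ((j : ℕ) + 1) * m = m + (j : ℕ) * m from by ring]
      simp only [pow_add]
      ring
  rw [S1, S2]
  abel

lemma final_alg {V : Type*} [AddCommGroup V] [Module k V] (m n : ℕ) (x y SA SB : V) :
    x - ((-1 : k) ^ ((m + 1) * (n + 1))) • y =
      ((-1 : k) ^ (n + 1)) •
        ((-SA - ((-1 : k) ^ ((n + 1) * m)) • y - ((-1 : k) ^ n) • x - SB)
          - (-SA - SB)) := by
  have e2 : (-1 : k) ^ (n + 1) * (-1 : k) ^ ((n + 1) * m) = (-1 : k) ^ ((m + 1) * (n + 1)) := by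
    rw [← pow_add, show (n + 1) + (n + 1) * m = (m + 1) * (n + 1) from by ring]
  have e1 : (-1 : k) ^ (n + 1) * (-1 : k) ^ n = -1 := by
    rw [← pow_add, show n + 1 + n = 2 * n + 1 from by ring, pow_succ, pow_mul]
    norm_num
  have h : (-SA - ((-1 : k) ^ ((n + 1) * m)) • y - ((-1 : k) ^ n) • x - SB) - (-SA - SB)
      = -(((-1 : k) ^ ((n + 1) * m)) • y) - ((-1 : k) ^ n) • x := by abel
  rw [h, smul_sub, smul_neg, smul_smul, smul_smul, e2, e1]
  module

end Aux
end NSOperad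

theorem cup_bracket_via_theta {k : Type*} [Field k] {Q : ℕ → Type*}
    [∀ n, AddCommGroup (Q n)] [∀ n, Module k (Q n)] (O : NSOperad k Q)
    (π : Q 1) (hπ : O.IsMult π) {m n : ℕ} (f : Q m) (g : Q n) :
    O.cupBracket π f g =
      ((-1 : k) ^ (n + 1)) •
        (tr (by omega : n + 1 + m = m + n + 1) (O.iota f (O.theta π g)) -
          tr (by omega : n + m + 1 = m + n + 1) (O.theta π (O.iota f g))) := by
  simp only [cupBracket, cup]
  rw [O.tr_comp, O.expandX π f g, O.expandY π f g]
  exact final_alg m n _ _ _ _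
end

section
/- Let P be a nonsymmetric operad with multiplication π. An element φ ∈ P_1 satisfies φ ∘_1 π = (π ∘_2 φ) ∘_1 φ (i.e., φ preserves the multiplication π) if and only if φ is a Maurer–Cartan element of the differential graded Lie algebra (P_•, [·,·]_π, D), i.e., D(φ) + ½[φ,φ]_π = 0. -/
open NSOperad

theorem preserves_iff_maurer_cartan {k : Type*} [Field k] [CharZero k] {Q : ℕ → Type*}
    [∀ n, AddCommGroup (Q n)] [∀ n, Module k (Q n)] (O : NSOperad k Q)
    (π : Q 1) (hπ : O.IsMult π) (φ : Q 0) :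
    O.comp rfl φ 0 π = O.comp rfl (O.comp rfl π 1 φ) 0 φ ↔
      O.Dop π φ + (2 : k)⁻¹ • O.cupBracket π φ φ = 0 := by
  have hD : O.Dop π φ = - O.comp rfl φ 0 π := by
    simp [NSOperad.Dop, NSOperad.iota, Fin.sum_univ_one]
  have hC : O.cupBracket π φ φ = (2 : k) • O.cup π φ φ := by
    simp only [NSOperad.cupBracket, NSOperad.tr]
    norm_num [two_smul]
  rw [hD, hC, smul_smul, inv_mul_cancel₀ (two_ne_zero), one_smul,
    neg_add_eq_zero]
  rfl
end

section
/- Let N ∈ P_1 be a Nijenhuis element for a multiplication π on a nonsymmetric operad P, i.e., (π ∘_2 N) ∘_1 N = N ∘_1 π_N where π_N := π ∘_1 N + π ∘_2 N − N ∘_1 π. Then for all k, l ≥ 0, (π_{N^l} ∘_2 N^k) ∘_1 N^k = N^k ∘_1 π_{N^{k+l}}, where N^k := N ∘_1 N^{k-1} (N^0 = 𝟙) and π_{N^k} := π ∘_1 N^k + π ∘_2 N^k − N^k ∘_1 π. -/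
open NSOperad

namespace NSOperad
section Aux

variable {k : Type*} [Field k] {Q : ℕ → Type*}
  [∀ n, AddCommGroup (Q n)] [∀ n, Module k (Q n)] (O : NSOperad k Q)

lemma comp_sub_left' {m n p : ℕ} (h : m + n = p) (f f' : Q m) (i : Fin (m+1)) (g : Q n) :
    O.comp h (f - f') i g = O.comp h f i g - O.comp h f' i g := by
  rw [eq_sub_iff_add_eq, ← O.comp_add_left, sub_add_cancel]

lemma comp_sub_right' {m n p : ℕ} (h : m + n = p) (f : Q m) (i : Fin (m+1)) (g g' : Q n) :
    O.comp h f i (g - g') = O.comp h f i g - O.comp h f i g' := by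
  rw [eq_sub_iff_add_eq, ← O.comp_add_right, sub_add_cancel]

-- (f∘₀g)∘₀h = f∘₀(g∘₀h), f : Q1, g h : Q0
lemma seqA_s8 (f : Q 1) (g h : Q 0) :
    O.comp rfl (O.comp rfl f 0 g) 0 h = O.comp rfl f 0 (O.comp rfl g 0 h) := by
  have := O.assoc_seq (rfl : (0:ℕ)+0 = 0) (rfl : (1:ℕ)+0 = 1) (rfl : (1:ℕ)+0 = 1)
    (rfl : (1:ℕ)+0 = 1) f g h 0 0
  simpa using this.symm

-- (f∘₁g)∘₁h = f∘₁(g∘₀h)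
lemma seqB_s8 (f : Q 1) (g h : Q 0) :
    O.comp rfl (O.comp rfl f 1 g) 1 h = O.comp rfl f 1 (O.comp rfl g 0 h) := by
  have := O.assoc_seq (rfl : (0:ℕ)+0 = 0) (rfl : (1:ℕ)+0 = 1) (rfl : (1:ℕ)+0 = 1)
    (rfl : (1:ℕ)+0 = 1) f g h 1 0
  simpa using this.symm

-- (x∘₀y)∘₀z = x∘₀(y∘₀z), all Q0
lemma seqC (x y z : Q 0) :
    O.comp rfl (O.comp rfl x 0 y) 0 z = O.comp rfl x 0 (O.comp rfl y 0 z) := by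
  have := O.assoc_seq (rfl : (0:ℕ)+0 = 0) (rfl : (0:ℕ)+0 = 0) (rfl : (0:ℕ)+0 = 0)
    (rfl : (0:ℕ)+0 = 0) x y z 0 0
  simpa using this.symm

-- x∘₀(f∘ᵢg) = (x∘₀f)∘ᵢg, x g : Q0, f : Q1
lemma seqD (x : Q 0) (f : Q 1) (i : Fin 2) (g : Q 0) :
    O.comp rfl x 0 (O.comp rfl f i g) = O.comp rfl (O.comp rfl x 0 f) i g := by
  have := O.assoc_seq (rfl : (1:ℕ)+0 = 1) (rfl : (0:ℕ)+1 = 1) (rfl : (0:ℕ)+1 = 1)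
    (rfl : (1:ℕ)+0 = 1) x f g 0 i
  simpa using this

-- x∘₀(y∘₀W) = (x∘₀y)∘₀W, x y : Q0, W : Q1
lemma seqE (x y : Q 0) (W : Q 1) :
    O.comp rfl x 0 (O.comp rfl y 0 W) = O.comp rfl (O.comp rfl x 0 y) 0 W := by
  have := O.assoc_seq (rfl : (0:ℕ)+1 = 1) (rfl : (0:ℕ)+1 = 1) (rfl : (0:ℕ)+0 = 0)
    (rfl : (0:ℕ)+1 = 1) x y W 0 0
  simpa using this

-- (f∘₀g)∘₁h = (f∘₁h)∘₀g, f : Q1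
lemma parA_s8 (f : Q 1) (g h : Q 0) :
    O.comp rfl (O.comp rfl f 0 g) 1 h = O.comp rfl (O.comp rfl f 1 h) 0 g := by
  have := O.assoc_par (rfl : (1:ℕ)+0 = 1) (rfl : (1:ℕ)+0 = 1) (rfl : (1:ℕ)+0 = 1)
    (rfl : (1:ℕ)+0 = 1) f g h 0 1 (by norm_num)
  simpa using this

end Aux

section Aux2

variable {k : Type*} [Field k] {Q : ℕ → Type*}
  [∀ n, AddCommGroup (Q n)] [∀ n, Module k (Q n)] (O : NSOperad k Q)

lemma Npow_mul (N : Q 0) (i j : ℕ) :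
    O.comp rfl (O.Npow N i) 0 (O.Npow N j) = O.Npow N (i + j) := by
  induction i with
  | zero => simpa [Npow] using O.one_comp (O.Npow N j)
  | succ i ih =>
      show O.comp rfl (O.comp rfl N 0 (O.Npow N i)) 0 (O.Npow N j) = _
      rw [seqC, ih, show i + 1 + j = (i + j) + 1 from by omega]
      rfl

lemma Npow_one (N : Q 0) : O.Npow N 1 = N := by
  simpa [Npow] using O.comp_one N 0

/-- `F m j l = N^m ∘₀ ((π ∘₂ N^l) ∘₁ N^j)` (0-based positions). -/
def Faux (π : Q 1) (N : Q 0) (m j l : ℕ) : Q 1 :=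
  O.comp rfl (O.Npow N m) 0 (O.comp rfl (O.comp rfl π 1 (O.Npow N l)) 0 (O.Npow N j))

variable (π : Q 1) (N : Q 0)

lemma Npow_succ_right (m : ℕ) : O.comp rfl (O.Npow N m) 0 N = O.Npow N (m+1) := by
  have := O.Npow_mul N m 1
  rwa [O.Npow_one] at this

lemma Faux_rel (hN : O.IsNijenhuisFor π N) (m j l : ℕ) :
    O.Faux π N m (j+1) (l+1) =
      O.Faux π N (m+1) (j+1) l + O.Faux π N (m+1) j (l+1) - O.Faux π N (m+2) j l := by
  show O.comp rfl (O.Npow N m) 0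
      (O.comp rfl (O.comp rfl π 1 (O.comp rfl N 0 (O.Npow N l))) 0
        (O.comp rfl N 0 (O.Npow N j))) = _
  rw [← O.seqB_s8 π N (O.Npow N l),
      ← O.seqA_s8 (O.comp rfl (O.comp rfl π 1 N) 1 (O.Npow N l)) N (O.Npow N j),
      ← O.parA_s8 (O.comp rfl π 1 N) N (O.Npow N l),
      hN,
      ← O.seqD N (O.piDef π N) 1 (O.Npow N l),
      ← O.seqD N (O.comp rfl (O.piDef π N) 1 (O.Npow N l)) 0 (O.Npow N j),
      O.seqE, O.Npow_succ_right]
  show O.comp rfl (O.Npow N (m+1)) 0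
      (O.comp rfl (O.comp rfl
        (O.comp rfl π 0 N + O.comp rfl π 1 N - O.comp rfl N 0 π) 1 (O.Npow N l)) 0
        (O.Npow N j)) = _
  rw [O.comp_sub_left', O.comp_add_left, O.comp_sub_left', O.comp_add_left,
      O.comp_sub_right', O.comp_add_right]
  have hA : O.comp rfl (O.Npow N (m+1)) 0
      (O.comp rfl (O.comp rfl (O.comp rfl π 0 N) 1 (O.Npow N l)) 0 (O.Npow N j)) =
      O.Faux π N (m+1) (j+1) l := by
    rw [O.parA_s8 π N (O.Npow N l), O.seqA_s8]
    rfl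
  have hB : O.comp rfl (O.Npow N (m+1)) 0
      (O.comp rfl (O.comp rfl (O.comp rfl π 1 N) 1 (O.Npow N l)) 0 (O.Npow N j)) =
      O.Faux π N (m+1) j (l+1) := by
    rw [O.seqB_s8]
    rfl
  have hC : O.comp rfl (O.Npow N (m+1)) 0
      (O.comp rfl (O.comp rfl (O.comp rfl N 0 π) 1 (O.Npow N l)) 0 (O.Npow N j)) =
      O.Faux π N (m+2) j l := by
    rw [← O.seqD N π 1 (O.Npow N l),
        ← O.seqD N (O.comp rfl π 1 (O.Npow N l)) 0 (O.Npow N j),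
        O.seqE, O.Npow_succ_right]
    rfl
  rw [hA, hB, hC]

lemma Faux_key (hN : O.IsNijenhuisFor π N) :
    ∀ j l m, O.Faux π N m j l =
      O.Faux π N (m+l) j 0 + O.Faux π N (m+j) 0 l - O.Faux π N (m+j+l) 0 0 := by
  intro j
  induction j with
  | zero => intro l m; simp only [Nat.add_zero, Nat.zero_add]; abel
  | succ j ihj =>
      intro l
      induction l with
      | zero => intro m; simp only [Nat.add_zero, Nat.zero_add]; abel
      | succ l ihl =>
          intro m
          rw [O.Faux_rel π N hN m j l, ihj (l+1) (m+1), ihj l (m+2), ihl (m+1)]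
          rw [show m+1+l = m+(l+1) from by omega,
              show m+1+(j+1) = m+2+j from by omega,
              show m+1+(l+1) = m+2+l from by omega,
              show m+1+j = m+(j+1) from by omega]
          abel

end Aux2

end NSOperad

theorem nijenhuis_power_identity {k : Type*} [Field k] {Q : ℕ → Type*}
    [∀ n, AddCommGroup (Q n)] [∀ n, Module k (Q n)] (O : NSOperad k Q)
    (π : Q 1) (hπ : O.IsMult π) (N : Q 0) (hN : O.IsNijenhuisFor π N) (a b : ℕ) :
    O.comp rfl (O.comp rfl (O.piDef π (O.Npow N b)) 1 (O.Npow N a)) 0 (O.Npow N a) =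
      O.comp rfl (O.Npow N a) 0 (O.piDef π (O.Npow N (a + b))) := by
  have hF0 : ∀ j l : ℕ, O.Faux π N 0 j l
      = O.comp rfl (O.comp rfl π 1 (O.Npow N l)) 0 (O.Npow N j) := fun j l =>
    O.one_comp _
  show O.comp rfl (O.comp rfl
      (O.comp rfl π 0 (O.Npow N b) + O.comp rfl π 1 (O.Npow N b)
        - O.comp rfl (O.Npow N b) 0 π) 1 (O.Npow N a)) 0 (O.Npow N a)
    = O.comp rfl (O.Npow N a) 0
      (O.comp rfl π 0 (O.Npow N (a+b)) + O.comp rfl π 1 (O.Npow N (a+b))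
        - O.comp rfl (O.Npow N (a+b)) 0 π)
  rw [O.comp_sub_left', O.comp_add_left, O.comp_sub_left', O.comp_add_left,
      O.comp_sub_right', O.comp_add_right]
  have h1 : O.comp rfl (O.comp rfl (O.comp rfl π 0 (O.Npow N b)) 1 (O.Npow N a)) 0 (O.Npow N a)
      = O.Faux π N 0 (b+a) a := by
    rw [O.parA_s8 π (O.Npow N b) (O.Npow N a), O.seqA_s8, O.Npow_mul]
    exact (hF0 _ _).symm
  have h2 : O.comp rfl (O.comp rfl (O.comp rfl π 1 (O.Npow N b)) 1 (O.Npow N a)) 0 (O.Npow N a)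
      = O.Faux π N 0 a (b+a) := by
    rw [O.seqB_s8, O.Npow_mul]
    exact (hF0 _ _).symm
  have h3 : O.comp rfl (O.comp rfl (O.comp rfl (O.Npow N b) 0 π) 1 (O.Npow N a)) 0 (O.Npow N a)
      = O.Faux π N b a a := by
    rw [← O.seqD (O.Npow N b) π 1 (O.Npow N a),
        ← O.seqD (O.Npow N b) (O.comp rfl π 1 (O.Npow N a)) 0 (O.Npow N a)]
    rfl
  have h4 : O.comp rfl (O.Npow N a) 0 (O.comp rfl π 0 (O.Npow N (a+b)))
      = O.Faux π N a (a+b) 0 := by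
    show _ = O.comp rfl (O.Npow N a) 0
      (O.comp rfl (O.comp rfl π 1 O.one) 0 (O.Npow N (a+b)))
    rw [O.comp_one]
  have h5 : O.comp rfl (O.Npow N a) 0 (O.comp rfl π 1 (O.Npow N (a+b)))
      = O.Faux π N a 0 (a+b) := by
    show _ = O.comp rfl (O.Npow N a) 0
      (O.comp rfl (O.comp rfl π 1 (O.Npow N (a+b))) 0 O.one)
    rw [O.comp_one]
  have h6 : O.comp rfl (O.Npow N a) 0 (O.comp rfl (O.Npow N (a+b)) 0 π)
      = O.Faux π N (a+(a+b)) 0 0 := by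
    rw [O.seqE, O.Npow_mul]
    show _ = O.comp rfl (O.Npow N (a+(a+b))) 0
      (O.comp rfl (O.comp rfl π 1 O.one) 0 O.one)
    rw [O.comp_one, O.comp_one]
  rw [h1, h2, h3, h4, h5, h6, O.Faux_key π N hN (b+a) a 0,
      O.Faux_key π N hN a (b+a) 0, O.Faux_key π N hN a a b]
  simp only [Nat.zero_add]
  rw [show b+a = a+b from by omega]
  abel
end

section
/- Let N be a Nijenhuis element for a multiplication π on a nonsymmetric operad P. Then (i) for any k ≥ 0, N^k is a Nijenhuis element for π; (ii) for any k, l ≥ 0, N^k is a Nijenhuis element for the deformed multiplication π_{N^l}, and (π_{N^l})_{N^k} = π_{N^{k+l}}; (iii) for any k, l ≥ 0, N^k + N^l is again a Nijenhuis element for π. -/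
open NSOperad
namespace NijAux

variable {k : Type*} [Field k] {Q : ℕ → Type*}
  [∀ n, AddCommGroup (Q n)] [∀ n, Module k (Q n)] (O : NSOperad k Q)

def m0 (S T : Q 0) : Q 0 := O.comp rfl S 0 T
def cl (ρ : Q 1) (S : Q 0) : Q 1 := O.comp rfl ρ 0 S
def cr (ρ : Q 1) (S : Q 0) : Q 1 := O.comp rfl ρ 1 S
def ca (S : Q 0) (ρ : Q 1) : Q 1 := O.comp rfl S 0 ρ

lemma m0_assoc (S T U : Q 0) : m0 O (m0 O S T) U = m0 O S (m0 O T U) :=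
  (O.assoc_seq rfl rfl rfl rfl S T U 0 0).symm

lemma cl_cl (ρ : Q 1) (S T : Q 0) : cl O (cl O ρ S) T = cl O ρ (m0 O S T) :=
  (O.assoc_seq rfl rfl rfl rfl ρ S T 0 0).symm

lemma cr_cr (ρ : Q 1) (S T : Q 0) : cr O (cr O ρ S) T = cr O ρ (m0 O S T) :=
  (O.assoc_seq rfl rfl rfl rfl ρ S T 1 0).symm

lemma cr_cl (ρ : Q 1) (S T : Q 0) : cr O (cl O ρ S) T = cl O (cr O ρ T) S :=
  O.assoc_par rfl rfl rfl rfl ρ S T 0 1 (by decide)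

lemma ca_cl (S : Q 0) (ρ : Q 1) (T : Q 0) : ca O S (cl O ρ T) = cl O (ca O S ρ) T :=
  O.assoc_seq rfl rfl rfl rfl S ρ T 0 0

lemma ca_cr (S : Q 0) (ρ : Q 1) (T : Q 0) : ca O S (cr O ρ T) = cr O (ca O S ρ) T :=
  O.assoc_seq rfl rfl rfl rfl S ρ T 0 1

lemma ca_ca (S T : Q 0) (ρ : Q 1) : ca O S (ca O T ρ) = ca O (m0 O S T) ρ :=
  O.assoc_seq rfl rfl rfl rfl S T ρ 0 0

lemma cl_one (ρ : Q 1) : cl O ρ O.one = ρ := O.comp_one ρ 0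
lemma cr_one (ρ : Q 1) : cr O ρ O.one = ρ := O.comp_one ρ 1
lemma ca_one (ρ : Q 1) : ca O O.one ρ = ρ := O.one_comp ρ
lemma m0_one (S : Q 0) : m0 O S O.one = S := O.comp_one S 0
lemma one_m0 (S : Q 0) : m0 O O.one S = S := O.one_comp S

end NijAux
namespace NijAux
variable {k : Type*} [Field k] {Q : ℕ → Type*}
  [∀ n, AddCommGroup (Q n)] [∀ n, Module k (Q n)] (O : NSOperad k Q)

def caH (S : Q 0) : Q 1 →+ Q 1 :=
  AddMonoidHom.mk' (fun ρ => ca O S ρ) (fun x y => O.comp_add_right rfl S 0 x y)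
def clH (S : Q 0) : Q 1 →+ Q 1 :=
  AddMonoidHom.mk' (fun ρ => cl O ρ S) (fun x y => O.comp_add_left rfl x y 0 S)
def crH (S : Q 0) : Q 1 →+ Q 1 :=
  AddMonoidHom.mk' (fun ρ => cr O ρ S) (fun x y => O.comp_add_left rfl x y 1 S)

@[simp] lemma caH_apply (S : Q 0) (ρ : Q 1) : caH O S ρ = ca O S ρ := rfl
@[simp] lemma clH_apply (S : Q 0) (ρ : Q 1) : clH O S ρ = cl O ρ S := rfl
@[simp] lemma crH_apply (S : Q 0) (ρ : Q 1) : crH O S ρ = cr O ρ S := rfl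

lemma ca_add' (S T : Q 0) (ρ : Q 1) : ca O (S + T) ρ = ca O S ρ + ca O T ρ :=
  O.comp_add_left rfl S T 0 ρ
lemma cl_add' (ρ : Q 1) (S T : Q 0) : cl O ρ (S + T) = cl O ρ S + cl O ρ T :=
  O.comp_add_right rfl ρ 0 S T
lemma cr_add' (ρ : Q 1) (S T : Q 0) : cr O ρ (S + T) = cr O ρ S + cr O ρ T :=
  O.comp_add_right rfl ρ 1 S T

variable (π : Q 1) (N : Q 0)

local notation "p" => O.Npow N

lemma pow_succ (a : ℕ) : p (a+1) = m0 O N (p a) := rfl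
lemma pow_zero' : p 0 = O.one := rfl
lemma pow_one' : p 1 = N := m0_one O N

lemma pow_add (a b : ℕ) : p (a + b) = m0 O (p a) (p b) := by
  induction a with
  | zero => simp [Nat.zero_add, pow_zero', one_m0]
  | succ a ih =>
      rw [show a + 1 + b = (a + b) + 1 from by omega, pow_succ, ih, pow_succ, m0_assoc]

/-- `F a b = (π ∘₂ N^b) ∘₁ N^a`. -/
def F (a b : ℕ) : Q 1 := cl O (cr O π (p b)) (p a)
def Ee (c d : ℕ) : Q 1 := ca O (p c) (cl O π (p d))
def Hh (c d : ℕ) : Q 1 := ca O (p c) (cr O π (p d))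
def Cc (n : ℕ) : Q 1 := ca O (p n) π

lemma F_a0 (a : ℕ) : F O π N a 0 = cl O π (p a) := by
  rw [F, pow_zero', cr_one]
lemma F_0b (b : ℕ) : F O π N 0 b = cr O π (p b) := by
  rw [F, pow_zero', cl_one]
lemma F_00 : F O π N 0 0 = π := by rw [F_a0, pow_zero', cl_one]

lemma caN_Ee (c d : ℕ) : ca O N (Ee O π N c d) = Ee O π N (c+1) d := by
  rw [Ee, Ee, ca_ca, pow_succ]
lemma caN_Hh (c d : ℕ) : ca O N (Hh O π N c d) = Hh O π N (c+1) d := by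
  rw [Hh, Hh, ca_ca, pow_succ]
lemma caN_Cc (n : ℕ) : ca O N (Cc O π N n) = Cc O π N (n+1) := by
  rw [Cc, Cc, ca_ca, pow_succ]
lemma caN_cl (m : ℕ) : ca O N (cl O π (p m)) = Ee O π N 1 m := by
  rw [Ee, pow_one']
lemma caN_cr (m : ℕ) : ca O N (cr O π (p m)) = Hh O π N 1 m := by
  rw [Hh, pow_one']

end NijAux
namespace NijAux
variable {k : Type*} [Field k] {Q : ℕ → Type*}
  [∀ n, AddCommGroup (Q n)] [∀ n, Module k (Q n)] (O : NSOperad k Q)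

lemma cl_sub3 (X Y Z : Q 1) (S : Q 0) :
    cl O (X + Y - Z) S = cl O X S + cl O Y S - cl O Z S := by
  have h1 := map_sub (clH O S) (X + Y) Z
  have h2 := map_add (clH O S) X Y
  simp only [clH_apply] at h1 h2
  rw [h1, h2]

lemma cr_sub3 (X Y Z : Q 1) (S : Q 0) :
    cr O (X + Y - Z) S = cr O X S + cr O Y S - cr O Z S := by
  have h1 := map_sub (crH O S) (X + Y) Z
  have h2 := map_add (crH O S) X Y
  simp only [crH_apply] at h1 h2
  rw [h1, h2]

lemma ca_sub3 (S : Q 0) (X Y Z : Q 1) :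
    ca O S (X + Y - Z) = ca O S X + ca O S Y - ca O S Z := by
  have h1 := map_sub (caH O S) (X + Y) Z
  have h2 := map_add (caH O S) X Y
  simp only [caH_apply] at h1 h2
  rw [h1, h2]

lemma cl_addl (X Y : Q 1) (S : Q 0) : cl O (X + Y) S = cl O X S + cl O Y S :=
  O.comp_add_left rfl X Y 0 S
lemma cr_addl (X Y : Q 1) (S : Q 0) : cr O (X + Y) S = cr O X S + cr O Y S :=
  O.comp_add_left rfl X Y 1 S
lemma ca_addl (S : Q 0) (X Y : Q 1) : ca O S (X + Y) = ca O S X + ca O S Y :=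
  O.comp_add_right rfl S 0 X Y

lemma piDef_eq (ρ : Q 1) (S : Q 0) :
    O.piDef ρ S = cl O ρ S + cr O ρ S - ca O S ρ := rfl

variable (π : Q 1) (N : Q 0)

local notation "p" => O.Npow N

lemma F_def (a b : ℕ) : F O π N a b = cl O (cr O π (p b)) (p a) := rfl
lemma Ee_def (c d : ℕ) : Ee O π N c d = ca O (p c) (cl O π (p d)) := rfl
lemma Hh_def (c d : ℕ) : Hh O π N c d = ca O (p c) (cr O π (p d)) := rfl
lemma Cc_def (n : ℕ) : Cc O π N n = ca O (p n) π := rfl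

lemma ca_pd (c d : ℕ) : ca O (p c) (O.piDef π (p d)) =
    Ee O π N c d + Hh O π N c d - Cc O π N (c + d) := by
  rw [piDef_eq, ca_sub3, ca_ca, ← pow_add, ← Ee_def, ← Hh_def, ← Cc_def]

variable (hN : O.IsNijenhuisFor π N)
include hN

lemma recur (a b : ℕ) : F O π N (a+1) (b+1) =
    ca O N (F O π N (a+1) b + F O π N a (b+1) - ca O N (F O π N a b)) := by
  have hN' : cl O (cr O π N) N = ca O N (O.piDef π N) := hN
  rw [F_def, pow_succ O N b, ← cr_cr, ← cr_cl, pow_succ O N a, ← cl_cl, hN', piDef_eq,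
    ← ca_cl, ← ca_cr, cl_sub3, cl_cl O π N (p a), ← pow_succ, ← ca_cl O N π (p a),
    cr_sub3, cr_cl O π (p (a+1)) (p b), cr_cl O (cr O π N) (p a) (p b),
    cr_cr, ← pow_succ, ← ca_cr, cr_cl O π (p a) (p b),
    ← F_def, ← F_def, ← F_def]
lemma base11 : F O π N 1 1 = Ee O π N 1 1 + Hh O π N 1 1 - Cc O π N 2 := by
  have h2 : O.Npow N 2 = m0 O N N := by rw [pow_succ, pow_one']
  rw [recur O π N hN 0 0, F_a0, F_0b, F_00, ca_sub3, caN_cl, caN_cr, ca_ca, ← h2, ← Cc_def]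

lemma closedAux : ∀ n a b, a + b ≤ n → F O π N (a+1) (b+1) =
    Ee O π N (b+1) (a+1) + Hh O π N (a+1) (b+1) - Cc O π N (a+b+2) := by
  intro n
  induction n with
  | zero =>
      intro a b h
      obtain ⟨rfl, rfl⟩ : a = 0 ∧ b = 0 := by omega
      exact base11 O π N hN
  | succ n ih =>
      intro a b h
      match a, b with
      | 0, 0 => exact base11 O π N hN
      | a'+1, 0 =>
          rw [recur O π N hN (a'+1) 0, F_a0, F_a0, ih a' 0 (by omega), caN_cl]
          have harr : cl O π (p (a'+2)) +
              (Ee O π N 1 (a'+1) + Hh O π N (a'+1) 1 - Cc O π N (a'+0+2)) -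
              Ee O π N 1 (a'+1) =
              cl O π (p (a'+2)) + Hh O π N (a'+1) 1 - Cc O π N (a'+2) := by abel
          rw [harr, ca_sub3, caN_cl, caN_Hh, caN_Cc,
            show a'+2+1 = a'+1+0+2 from by omega, show a'+1+1 = a'+2 from by omega]
      | 0, b'+1 =>
          rw [recur O π N hN 0 (b'+1), F_0b, F_0b, ih 0 b' (by omega), caN_cr]
          have harr : (Ee O π N (b'+1) 1 + Hh O π N 1 (b'+1) - Cc O π N (0+b'+2)) +
              cr O π (p (b'+2)) - Hh O π N 1 (b'+1) =
              Ee O π N (b'+1) 1 + cr O π (p (b'+2)) - Cc O π N (b'+2) := by abel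
          rw [harr, ca_sub3, caN_Ee, caN_cr, caN_Cc,
            show b'+2+1 = 0+(b'+1)+2 from by omega, show b'+1+1 = b'+2 from by omega,
            show (0:ℕ)+1 = 1 from rfl]
      | a'+1, b'+1 =>
          rw [recur O π N hN (a'+1) (b'+1), ih a' (b'+1) (by omega), ih (a'+1) b' (by omega),
            ih a' b' (by omega)]
          simp only [ca_sub3, caN_Ee, caN_Hh, caN_Cc]
          rw [show a'+1+b'+2 = a'+b'+3 from by omega,
            show a'+(b'+1)+2 = a'+b'+3 from by omega,
            show a'+b'+2+1 = a'+b'+3 from by omega,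
            show a'+b'+3+1 = a'+1+(b'+1)+2 from by omega,
            show b'+1+1 = b'+2 from by omega, show a'+1+1 = a'+2 from by omega]
          abel
omit hN in
lemma Ee_0d (d : ℕ) : Ee O π N 0 d = cl O π (p d) := by rw [Ee_def, pow_zero', ca_one]
omit hN in
lemma Hh_0d (d : ℕ) : Hh O π N 0 d = cr O π (p d) := by rw [Hh_def, pow_zero', ca_one]
omit hN in
lemma Ee_c0 (c : ℕ) : Ee O π N c 0 = Cc O π N c := by
  rw [Ee_def, pow_zero', cl_one, Cc_def]
omit hN in
lemma Hh_c0 (c : ℕ) : Hh O π N c 0 = Cc O π N c := by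
  rw [Hh_def, pow_zero', cr_one, Cc_def]

lemma nijF : ∀ a, F O π N a a = ca O (p a) (O.piDef π (p a)) := by
  intro a
  match a with
  | 0 =>
      rw [F_00, ca_pd, Ee_0d, Hh_0d, pow_zero', cl_one, cr_one,
        show (0:ℕ)+0 = 0 from rfl, Cc_def, pow_zero', ca_one]
      abel
  | a'+1 =>
      rw [closedAux O π N hN (a'+a') a' a' le_rfl, ca_pd,
        show a'+1+(a'+1) = a'+a'+2 from by omega]

lemma symF : ∀ a b, F O π N a b + F O π N b a =
    ca O (p a) (O.piDef π (p b)) + ca O (p b) (O.piDef π (p a)) := by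
  intro a b
  match a, b with
  | 0, b =>
      rw [F_0b, F_a0, ca_pd, ca_pd, Ee_0d, Hh_0d, Ee_c0, Hh_c0,
        show (0:ℕ)+b = b from by omega, show b+0 = b from by omega]
      abel
  | a+1, 0 =>
      rw [F_a0, F_0b, ca_pd, ca_pd, Ee_0d, Hh_0d, Ee_c0, Hh_c0,
        show (0:ℕ)+(a+1) = a+1 from by omega, show a+1+0 = a+1 from by omega]
      abel
  | a+1, b+1 =>
      rw [closedAux O π N hN (a+b) a b le_rfl, closedAux O π N hN (a+b) b a (by omega),
        ca_pd, ca_pd, show b+a+2 = a+b+2 from by omega,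
        show a+1+(b+1) = a+b+2 from by omega, show b+1+(a+1) = a+b+2 from by omega]
      abel

end NijAux
open NijAux in
theorem nijenhuis_hierarchy {k : Type*} [Field k] {Q : ℕ → Type*}
    [∀ n, AddCommGroup (Q n)] [∀ n, Module k (Q n)] (O : NSOperad k Q)
    (π : Q 1) (hπ : O.IsMult π) (N : Q 0) (hN : O.IsNijenhuisFor π N) :
    (∀ a : ℕ, O.IsNijenhuisFor π (O.Npow N a)) ∧
    (∀ a b : ℕ, O.IsNijenhuisFor (O.piDef π (O.Npow N b)) (O.Npow N a) ∧
      O.piDef (O.piDef π (O.Npow N b)) (O.Npow N a) = O.piDef π (O.Npow N (a + b))) ∧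
    (∀ a b : ℕ, O.IsNijenhuisFor π (O.Npow N a + O.Npow N b)) := by
  have hnij := nijF O π N hN
  have hsym := symF O π N hN
  have pdd : ∀ a b : ℕ, O.piDef (O.piDef π (O.Npow N b)) (O.Npow N a) =
      O.piDef π (O.Npow N (a + b)) := by
    intro a b
    have hs : F O π N a b + F O π N b a =
        (Ee O π N a b + Hh O π N a b - Cc O π N (a+b)) +
        (Ee O π N b a + Hh O π N b a - Cc O π N (a+b)) := by
      have h := hsym a b
      rw [ca_pd, ca_pd, show b+a = a+b from Nat.add_comm b a] at h
      exact h
    rw [piDef_eq O (O.piDef π (O.Npow N b)) (O.Npow N a), piDef_eq O π (O.Npow N b),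
      cl_sub3, cr_sub3, ca_sub3,
      cl_cl O π (O.Npow N b) (O.Npow N a), cr_cr O π (O.Npow N b) (O.Npow N a),
      ← pow_add O N b a, show b+a = a+b from Nat.add_comm b a,
      ← ca_cl O (O.Npow N b) π (O.Npow N a), ← Ee_def O π N b a,
      ← F_def O π N a b,
      cr_cl O π (O.Npow N b) (O.Npow N a), ← F_def O π N b a,
      ← ca_cr O (O.Npow N b) π (O.Npow N a), ← Hh_def O π N b a,
      ← Ee_def O π N a b, ← Hh_def O π N a b,
      ca_ca O (O.Npow N a) (O.Npow N b) π, ← pow_add O N a b, ← Cc_def O π N (a+b),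
      piDef_eq O π (O.Npow N (a+b)), ← Cc_def O π N (a+b),
      eq_sub_of_add_eq hs]
    abel
  refine ⟨fun a => hnij a, fun a b => ⟨?_, pdd a b⟩, ?_⟩
  · show cl O (cr O (O.piDef π (O.Npow N b)) (O.Npow N a)) (O.Npow N a) =
      ca O (O.Npow N a) (O.piDef (O.piDef π (O.Npow N b)) (O.Npow N a))
    rw [pdd a b, piDef_eq O π (O.Npow N b), cr_sub3,
      cr_cl O π (O.Npow N b) (O.Npow N a), cr_cr O π (O.Npow N b) (O.Npow N a),
      ← pow_add O N b a, ← ca_cr O (O.Npow N b) π (O.Npow N a),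
      cl_sub3, cl_cl O (cr O π (O.Npow N a)) (O.Npow N b) (O.Npow N a),
      ← pow_add O N b a,
      ← ca_cl O (O.Npow N b) (cr O π (O.Npow N a)) (O.Npow N a),
      ← F_def O π N a a, hnij a,
      ca_ca O (O.Npow N b) (O.Npow N a) (O.piDef π (O.Npow N a)), ← pow_add O N b a,
      show b+a = a+b from Nat.add_comm b a,
      ← F_def O π N (a+b) a, ← F_def O π N a (a+b),
      eq_sub_of_add_eq (hsym a (a+b))]
    abel
  · intro a b
    have pd_add : O.piDef π (O.Npow N a + O.Npow N b) =
        O.piDef π (O.Npow N a) + O.piDef π (O.Npow N b) := by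
      rw [piDef_eq, piDef_eq, piDef_eq, cl_add', cr_add', ca_add']
      abel
    show cl O (cr O π (O.Npow N a + O.Npow N b)) (O.Npow N a + O.Npow N b) =
      ca O (O.Npow N a + O.Npow N b) (O.piDef π (O.Npow N a + O.Npow N b))
    rw [cr_add', cl_addl, cl_add', cl_add', pd_add, ca_add', ca_addl, ca_addl,
      ← F_def O π N a a, ← F_def O π N b a, ← F_def O π N a b, ← F_def O π N b b,
      hnij a, hnij b, eq_sub_of_add_eq (hsym a b)]
    abel
end
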